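/- For every integer n ≥ 3 and every positive integer t, the number of points x ∈ ℤ⁴ lying in the dilate t·P(4,n) equals (n⁴ − 3n² − 4n − 9/4)·t⁴ + (4n³ − 3n² − 6n − 5/2)·t³ + (6n² − 6n − 9/4)·t² + (4n − 3)·t + 1, as an equality of real numbers. -/

import Mathlib

/-!
By Hahn–Banach, and a greedy vertex maximising any linear functional, `P(m,n)` is cut out by
`x ≥ 0` and `∑ i ∈ S, x i ≤ n + (n - 1) + ⋯ + (n - #S + 1)`. For `m ≤ n + 1` the reflection
`y = t n - x` turns the lattice points of `t P(m,n)` into the integer points `y ∈ [0, t n]^m` with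
`∑ i ∈ S, y i ≥ t * (#S).choose 2` for every `S`. For `m = 4`, once `(y 0, y 1) = (a, b)` is
fixed, the admissible `(y 2, y 3)` fill a square `[M, t n]²` with a corner triangle removed, where
`M` and the corner depend piecewise linearly on `(a, b)`; summing this closed form over the linear
pieces is Faulhaber summation.
-/

open scoped Pointwise

def ppVertices (m n : ℕ) : Set (Fin m → ℝ) :=
  {x | (∀ i, ∃ k : ℕ, k ≤ n ∧ x i = k) ∧
       ∀ i j : Fin m, i ≠ j → x i ≠ 0 → x j ≠ 0 → x i ≠ x j}

/-- The partial permutohedron `P(m,n)`. -/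
def partialPermutohedron (m n : ℕ) : Set (Fin m → ℝ) :=
  convexHull ℝ (ppVertices m n)

noncomputable def latticeCount (m n t : ℕ) : ℕ :=
  {x : Fin m → ℤ | (fun i => (x i : ℝ)) ∈ (t : ℝ) • partialPermutohedron m n}.ncard

open Finset

/-- The truncated subtraction is intended: it is the largest value of `∑ i ∈ S, v i` over the
vertices `v` of `P(m,n)` with `#S = k`, since a vertex may repeat the value `0`. -/
def maxCoordSum (n k : ℕ) : ℕ := ∑ j ∈ range k, (n - j)

lemma maxCoordSum_mono (n : ℕ) : Monotone (maxCoordSum n) := fun _ _ h =>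
  sum_le_sum_of_subset (range_subset_range.2 h)

lemma maxCoordSum_succ_succ (n k : ℕ) :
    maxCoordSum (n + 1) (k + 1) = maxCoordSum n k + (n + 1) := by
  simp [maxCoordSum, sum_range_succ']

lemma sum_le_maxCoordSum {n : ℕ} {s : Finset ℕ} (hs : ∀ v ∈ s, v ≤ n) :
    ∑ v ∈ s, v ≤ maxCoordSum n #s := by
  induction n generalizing s with
  | zero => simp [sum_eq_zero fun v hv => Nat.le_zero.1 (hs v hv)]
  | succ n ih =>
    by_cases hn : n + 1 ∈ s
    · have hs' : ∀ v ∈ s.erase (n + 1), v ≤ n := fun v hv => by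
        have := hs v (mem_of_mem_erase hv); have := ne_of_mem_erase hv; omega
      rw [← add_sum_erase s _ hn, ← card_erase_add_one hn, maxCoordSum_succ_succ]
      have := ih hs'
      omega
    · have hs' : ∀ v ∈ s, v ≤ n := fun v hv => by
        have := hs v hv; have : v ≠ n + 1 := fun h => hn (h ▸ hv); omega
      exact (ih hs').trans (sum_le_sum fun j _ => by omega)

lemma maxCoordSum_add_choose {n k : ℕ} (hk : k ≤ n + 1) :
    maxCoordSum n k + k.choose 2 = k * n := by
  induction k with
  | zero => simp [maxCoordSum]
  | succ k ih =>
    have hchoose : (k + 1).choose 2 = k.choose 2 + k := by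
      rw [Nat.choose_succ_succ', Nat.choose_one_right, add_comm]
    rw [maxCoordSum, sum_range_succ, ← maxCoordSum, hchoose, add_mul, one_mul, ← ih (by omega)]
    omega

lemma mem_ppVertices_iff {m n : ℕ} {x : Fin m → ℝ} :
    x ∈ ppVertices m n ↔ ∃ k : Fin m → ℕ, (∀ i, k i ≤ n) ∧
      (∀ i j, i ≠ j → k i ≠ 0 → k i ≠ k j) ∧ x = fun i => (k i : ℝ) := by
  constructor
  · rintro ⟨hx, hdist⟩
    choose k hkn hxk using hx
    refine ⟨k, hkn, fun i j hij hi heq => hdist i j hij ?_ ?_ ?_, funext hxk⟩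
    · rw [hxk]; exact_mod_cast hi
    · rw [hxk, ← heq]; exact_mod_cast hi
    · rw [hxk, hxk, heq]
  · rintro ⟨k, hkn, hdist, rfl⟩
    refine ⟨fun i => ⟨k i, hkn i, rfl⟩, fun i j hij hi _ heq => hdist i j hij ?_ ?_⟩ <;>
      simp_all only [ne_eq, Nat.cast_eq_zero, Nat.cast_inj, not_false_eq_true]

def ppHalfspaces (m n : ℕ) : Set (Fin m → ℝ) :=
  {x | (∀ i, 0 ≤ x i) ∧ ∀ S : Finset (Fin m), ∑ i ∈ S, x i ≤ maxCoordSum n #S}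

lemma ppVertices_subset_ppHalfspaces (m n : ℕ) : ppVertices m n ⊆ ppHalfspaces m n := by
  intro x hx
  obtain ⟨k, hkn, hdist, rfl⟩ := mem_ppVertices_iff.1 hx
  refine ⟨fun i => Nat.cast_nonneg _, fun S => ?_⟩
  set S' := S.filter (k · ≠ 0)
  have hinj : Set.InjOn k S' := fun i hi j hj hij => by
    by_contra hne; exact hdist i j hne (mem_filter.1 hi).2 hij
  have hsum : ∑ i ∈ S, k i = ∑ v ∈ S'.image k, v := by
    rw [sum_image hinj, sum_filter_ne_zero]
  have hbound : ∑ v ∈ S'.image k, v ≤ maxCoordSum n #S :=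
    (sum_le_maxCoordSum (by simp [hkn])).trans
      (maxCoordSum_mono n (card_image_le.trans (card_filter_le _ _)))
  show ∑ i ∈ S, (k i : ℝ) ≤ maxCoordSum n #S
  exact_mod_cast hsum ▸ hbound

lemma convex_ppHalfspaces (m n : ℕ) : Convex ℝ (ppHalfspaces m n) := by
  intro x hx y hy a b ha hb hab
  refine ⟨fun i => ?_, fun S => ?_⟩
  · have := hx.1 i; have := hy.1 i
    simp only [Pi.add_apply, Pi.smul_apply, smul_eq_mul]
    positivity
  · simp only [Pi.add_apply, Pi.smul_apply, smul_eq_mul]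
    rw [sum_add_distrib, ← mul_sum, ← mul_sum]
    calc a * ∑ i ∈ S, x i + b * ∑ i ∈ S, y i
        ≤ a * maxCoordSum n #S + b * maxCoordSum n #S :=
          add_le_add (mul_le_mul_of_nonneg_left (hx.2 S) ha) (mul_le_mul_of_nonneg_left (hy.2 S) hb)
      _ = maxCoordSum n #S := by rw [← add_mul, hab, one_mul]

lemma finite_ppVertices (m n : ℕ) : (ppVertices m n).Finite := by
  refine (Set.finite_range fun k : Fin m → Fin (n + 1) => fun i => ((k i : ℕ) : ℝ)).subset ?_
  intro x hx
  obtain ⟨k, hkn, -, rfl⟩ := mem_ppVertices_iff.1 hx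
  exact ⟨fun i => ⟨k i, Nat.lt_succ_of_le (hkn i)⟩, rfl⟩

theorem sum_mul_le_sum_mul_of_sum_Iic_le :
    ∀ {m : ℕ} {p y w : Fin m → ℝ}, Antitone p → (∀ k, 0 ≤ p k) →
      (∀ j, ∑ k ∈ Iic j, y k ≤ ∑ k ∈ Iic j, w k) → ∑ k, p k * y k ≤ ∑ k, p k * w k
  | 0, _, _, _, _, _, _ => by simp
  | m + 1, p, y, w, hp, hp0, hyw => by
    set q := p (Fin.last m)
    have hdecomp : ∀ z : Fin (m + 1) → ℝ, ∑ k, p k * z k =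
        ∑ k : Fin m, (p k.castSucc - q) * z k.castSucc + q * ∑ k, z k := by
      intro z
      rw [Fin.sum_univ_castSucc, Fin.sum_univ_castSucc z, mul_add, mul_sum]
      simp only [sub_mul, sum_sub_distrib]
      ring
    have hinit := sum_mul_le_sum_mul_of_sum_Iic_le (p := fun k => p k.castSucc - q)
      (y := fun k => y k.castSucc) (w := fun k => w k.castSucc)
      (fun i j hij => sub_le_sub_right (hp (Fin.castSucc_le_castSucc_iff.2 hij)) q)
      (fun k => sub_nonneg.2 (hp (Fin.castSucc_lt_last k).le))
      (fun j => by
        simpa only [← Fin.map_castSuccEmb_Iic, sum_map, Fin.coe_castSuccEmb] using hyw j.castSucc)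
    have htotal : ∑ k, y k ≤ ∑ k, w k := by
      simpa only [← Fin.top_eq_last, Iic_top] using hyw (Fin.last m)
    rw [hdecomp y, hdecomp w]
    exact add_le_add hinit (mul_le_mul_of_nonneg_left htotal (hp0 _))

lemma sum_Iic_sub_eq_maxCoordSum {m : ℕ} (n : ℕ) (j : Fin m) :
    ∑ k ∈ Iic j, ((n - k : ℕ) : ℝ) = maxCoordSum n (j + 1) := by
  rw [maxCoordSum, Nat.range_succ_eq_Iic, ← Fin.map_valEmbedding_Iic, sum_map]
  push_cast
  rfl

lemma exists_mem_ppVertices_le {m n : ℕ} {x : Fin m → ℝ} (hx : x ∈ ppHalfspaces m n)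
    (c : Fin m → ℝ) : ∃ v ∈ ppVertices m n, ∑ i, x i * c i ≤ ∑ i, v i * c i := by
  -- The greedy vertex: `n, n - 1, …` on the coordinates in decreasing order of `c`,
  -- and `0` where `c ≤ 0`.
  set σ := Tuple.sort fun i => -c i
  have hσ : Antitone (c ∘ σ) := fun i j hij => by
    simpa using Tuple.monotone_sort (fun i => -c i) hij
  set k : Fin m → ℕ := fun i => if 0 < c i then n - σ.symm i else 0
  have hk : ∀ j, (k (σ j) : ℝ) * c (σ j) = max (c (σ j)) 0 * ((n - j : ℕ) : ℝ) := by
    intro j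
    by_cases hj : 0 < c (σ j)
    · simp [k, hj, max_eq_left hj.le, mul_comm]
    · simp [k, hj, max_eq_right (not_lt.1 hj)]
  refine ⟨fun i => k i, mem_ppVertices_iff.2 ⟨k, fun i => ?_, fun i j hij hi heq => ?_, rfl⟩, ?_⟩
  · simp only [k]; split_ifs <;> omega
  · simp only [k] at hi heq
    split_ifs at hi heq with hci hcj <;> try omega
    have : (σ.symm i : ℕ) = σ.symm j := by omega
    exact hij (σ.symm.injective (Fin.ext this))
  · calc ∑ i, x i * c i = ∑ j, c (σ j) * x (σ j) := by
          rw [← Equiv.sum_comp σ (fun i => x i * c i)]; simp only [mul_comm]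
      _ ≤ ∑ j, max (c (σ j)) 0 * x (σ j) :=
          sum_le_sum fun j _ => mul_le_mul_of_nonneg_right (le_max_left _ _) (hx.1 _)
      _ ≤ ∑ j, max (c (σ j)) 0 * ((n - j : ℕ) : ℝ) := by
          refine sum_mul_le_sum_mul_of_sum_Iic_le (fun i j hij => max_le_max (hσ hij) le_rfl)
            (fun _ => le_max_right _ _) fun j => ?_
          have := hx.2 ((Iic j).map σ.toEmbedding)
          rwa [sum_map, card_map, Fin.card_Iic, ← sum_Iic_sub_eq_maxCoordSum] at this
      _ = ∑ i, (k i : ℝ) * c i := by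
          rw [← Equiv.sum_comp σ (fun i => (k i : ℝ) * c i)]
          exact sum_congr rfl fun j _ => (hk j).symm

lemma ppHalfspaces_subset_partialPermutohedron (m n : ℕ) :
    ppHalfspaces m n ⊆ partialPermutohedron m n := by
  intro x hx
  by_contra hnot
  obtain ⟨f, u, hfu, hux⟩ := geometric_hahn_banach_closed_point (convex_convexHull ℝ _)
    ((finite_ppVertices m n).isCompact_convexHull (𝕜 := ℝ) |>.isClosed) hnot
  have hf : ∀ y, f y = ∑ i, y i * f (fun j => if i = j then 1 else 0) := fun y => by
    simpa using LinearMap.pi_apply_eq_sum_univ (f : (Fin m → ℝ) →ₗ[ℝ] ℝ) y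
  obtain ⟨v, hv, hle⟩ := exists_mem_ppVertices_le hx fun i => f fun j => if i = j then 1 else 0
  have := hfu v (subset_convexHull ℝ _ hv)
  rw [hf] at this hux
  linarith

theorem partialPermutohedron_eq_ppHalfspaces (m n : ℕ) :
    partialPermutohedron m n = ppHalfspaces m n :=
  (convexHull_min (ppVertices_subset_ppHalfspaces m n) (convex_ppHalfspaces m n)).antisymm
    (ppHalfspaces_subset_partialPermutohedron m n)

lemma intCast_mem_smul_partialPermutohedron_iff {m n t : ℕ} (ht : 0 < t) (x : Fin m → ℤ) :
    (fun i => (x i : ℝ)) ∈ (t : ℝ) • partialPermutohedron m n ↔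
      (∀ i, 0 ≤ x i) ∧ ∀ S : Finset (Fin m), ∑ i ∈ S, x i ≤ t * maxCoordSum n #S := by
  have ht' : (0 : ℝ) < t := by exact_mod_cast ht
  rw [partialPermutohedron_eq_ppHalfspaces, Set.mem_smul_set_iff_inv_smul_mem₀ ht'.ne']
  simp only [ppHalfspaces, Set.mem_ofPred_eq, Pi.smul_apply, smul_eq_mul, ← mul_sum,
    inv_mul_le_iff₀ ht', mul_nonneg_iff_of_pos_left (inv_pos.2 ht')]
  norm_cast

lemma latticeCount_eq_ncard {m n t : ℕ} (hmn : m ≤ n + 1) (ht : 0 < t) :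
    latticeCount m n t = {y : Fin m → ℤ | (∀ i, y i ≤ t * n) ∧
      ∀ S : Finset (Fin m), t * (#S).choose 2 ≤ ∑ i ∈ S, y i}.ncard := by
  set A : ℤ := t * n
  have hrefl : Function.Involutive fun y : Fin m → ℤ => fun i => A - y i :=
    fun y => by simp
  rw [latticeCount, ← Set.ncard_preimage_of_injective_subset_range hrefl.injective
    (by simp [hrefl.surjective.range_eq])]
  congr 1
  ext x
  simp only [Set.mem_ofPred_eq, Set.mem_preimage, intCast_mem_smul_partialPermutohedron_iff ht]
  refine and_congr (forall_congr' fun i => by omega) (forall_congr' fun S => ?_)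
  have hS : #S ≤ n + 1 := (card_le_univ S).trans (by simpa using hmn)
  have key : (t : ℤ) * maxCoordSum n #S + t * (#S).choose 2 = #S * A := by
    have := congrArg (fun k : ℕ => (t * k : ℤ)) (maxCoordSum_add_choose hS)
    push_cast at this
    linear_combination this
  rw [sum_sub_distrib, sum_const, nsmul_eq_mul]
  constructor <;> intro h <;> linarith

def SubsetSumsGe (T a b c d : ℤ) : Prop :=
  T ≤ a + b ∧ T ≤ a + c ∧ T ≤ a + d ∧ T ≤ b + c ∧ T ≤ b + d ∧ T ≤ c + d ∧
    3 * T ≤ a + b + c ∧ 3 * T ≤ a + b + d ∧ 3 * T ≤ a + c + d ∧ 3 * T ≤ b + c + d ∧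
    6 * T ≤ a + b + c + d

instance (T a b c d : ℤ) : Decidable (SubsetSumsGe T a b c d) := by
  unfold SubsetSumsGe; infer_instance

lemma univ_finset_fin_four : (univ : Finset (Finset (Fin 4))) =
    {∅, {0}, {1}, {2}, {3}, {0, 1}, {0, 2}, {0, 3}, {1, 2}, {1, 3}, {2, 3},
      {0, 1, 2}, {0, 1, 3}, {0, 2, 3}, {1, 2, 3}, {0, 1, 2, 3}} := by
  decide

lemma forall_choose_le_sum_iff (T : ℤ) (y : Fin 4 → ℤ) :
    (∀ S : Finset (Fin 4), T * (#S).choose 2 ≤ ∑ i ∈ S, y i) ↔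
      (∀ i, 0 ≤ y i) ∧ SubsetSumsGe T (y 0) (y 1) (y 2) (y 3) := by
  have hS : (∀ S : Finset (Fin 4), T * (#S).choose 2 ≤ ∑ i ∈ S, y i) ↔
      ∀ S ∈ (univ : Finset (Finset (Fin 4))), T * (#S).choose 2 ≤ ∑ i ∈ S, y i := by
    simp only [mem_univ, forall_const]
  rw [hS, univ_finset_fin_four]
  simp [SubsetSumsGe, Fin.forall_fin_succ, Nat.choose]
  omega

lemma ncard_eq_card_filter_subsetSumsGe (A T : ℤ) :
    {y : Fin 4 → ℤ | (∀ i, y i ≤ A) ∧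
        ∀ S : Finset (Fin 4), T * (#S).choose 2 ≤ ∑ i ∈ S, y i}.ncard =
      #{p ∈ (Ioc (-1) A ×ˢ Ioc (-1) A) ×ˢ (Ioc (-1) A ×ˢ Ioc (-1) A) |
        SubsetSumsGe T p.1.1 p.1.2 p.2.1 p.2.2} := by
  have hinj : Function.Injective fun y : Fin 4 → ℤ => ((y 0, y 1), (y 2, y 3)) := by
    intro y z h
    simp only [Prod.mk.injEq] at h
    ext i; fin_cases i <;> simp [h]
  rw [← Set.ncard_coe_finset, ← Set.ncard_image_of_injective _ hinj]
  congr 1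
  ext ⟨⟨a, b⟩, c, d⟩
  simp only [Set.mem_image, Set.mem_ofPred_eq, forall_choose_le_sum_iff, coe_filter, mem_product,
    mem_Ioc, Prod.mk.injEq]
  constructor
  · rintro ⟨y, ⟨hA, h0, hs⟩, ⟨rfl, rfl⟩, rfl, rfl⟩
    refine ⟨⟨⟨⟨?_, ?_⟩, ?_, ?_⟩, ⟨?_, ?_⟩, ?_, ?_⟩, hs⟩ <;>
      linarith [hA 0, hA 1, hA 2, hA 3, h0 0, h0 1, h0 2, h0 3]
  · rintro ⟨⟨⟨ha, hb⟩, hc, hd⟩, hs⟩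
    refine ⟨![a, b, c, d], ⟨fun i => ?_, fun i => ?_, hs⟩, ⟨rfl, rfl⟩, rfl, rfl⟩ <;>
      fin_cases i <;> simp <;> omega

lemma sum_Ioc_eq_sub_of_forall_sub_eq {f F : ℤ → ℝ} (hF : ∀ x, F x - F (x - 1) = f x) {l u : ℤ}
    (hlu : l ≤ u) : ∑ x ∈ Ioc l u, f x = F u - F l := by
  obtain ⟨k, rfl⟩ : ∃ k : ℕ, u = l + k := ⟨(u - l).toNat, by omega⟩
  induction k with
  | zero => simp
  | succ k ih =>
    rw [Nat.cast_succ, ← add_assoc, ← insert_Ioc_right_eq_Ioc_add_one (by omega),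
      sum_insert (by simp), ih (by omega), ← hF]
    ring_nf

section Faulhaber

variable {l u : ℤ}

lemma sum_Ioc_const (hlu : l ≤ u) (c : ℝ) : ∑ _x ∈ Ioc l u, c = ((u : ℝ) - l) * c :=
  (sum_Ioc_eq_sub_of_forall_sub_eq (F := fun x => x * c) (fun x => by push_cast; ring) hlu).trans
    (by ring)

lemma sum_Ioc_id (hlu : l ≤ u) : ∑ x ∈ Ioc l u, (x : ℝ) = ((u : ℝ) * (u + 1) - l * (l + 1)) / 2 :=
  (sum_Ioc_eq_sub_of_forall_sub_eq (F := fun x : ℤ => (x : ℝ) * (x + 1) / 2)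
    (fun x => by push_cast; ring) hlu).trans (by ring)

lemma sum_Ioc_sq (hlu : l ≤ u) : ∑ x ∈ Ioc l u, (x : ℝ) ^ 2 =
    ((u : ℝ) * (u + 1) * (2 * u + 1) - l * (l + 1) * (2 * l + 1)) / 6 :=
  (sum_Ioc_eq_sub_of_forall_sub_eq (F := fun x : ℤ => (x : ℝ) * (x + 1) * (2 * x + 1) / 6)
    (fun x => by push_cast; ring) hlu).trans (by ring)

lemma sum_Ioc_cube (hlu : l ≤ u) :
    ∑ x ∈ Ioc l u, (x : ℝ) ^ 3 = (((u : ℝ) * (u + 1)) ^ 2 - (l * (l + 1)) ^ 2) / 4 :=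
  (sum_Ioc_eq_sub_of_forall_sub_eq (F := fun x : ℤ => ((x : ℝ) * (x + 1)) ^ 2 / 4)
    (fun x => by push_cast; ring) hlu).trans (by ring)

end Faulhaber

lemma sum_Ioc_add_sum_Ioc {f : ℤ → ℝ} {l m u : ℤ} (hlm : l ≤ m) (hmu : m ≤ u) :
    ∑ x ∈ Ioc l m, f x + ∑ x ∈ Ioc m u, f x = ∑ x ∈ Ioc l u, f x := by
  rw [← sum_union (disjoint_left.2 fun x hx hx' => by simp only [mem_Ioc] at hx hx'; omega),
    Ioc_union_Ioc_eq_Ioc hlm hmu]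

lemma card_filter_product {α β : Type*} (s : Finset α) (t : Finset β) (P : α × β → Prop)
    [DecidablePred P] : #{p ∈ s ×ˢ t | P p} = ∑ a ∈ s, #{b ∈ t | P (a, b)} := by
  simp only [card_filter, sum_product]

/-- The square `[M, A]²` minus the triangle of lattice points below the line `c + d = K`. -/
noncomputable def cornerCount (A M K : ℤ) : ℝ :=
  ((A : ℝ) + 1 - M) ^ 2 - ((K : ℝ) - 2 * M) * (K - 2 * M + 1) / 2

lemma card_filter_le_add_eq_cornerCount {A M K : ℤ} (hMK : 2 * M ≤ K) (hKA : K ≤ A + M) :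
    (#{q ∈ Ioc (M - 1) A ×ˢ Ioc (M - 1) A | K ≤ q.1 + q.2} : ℝ) = cornerCount A M K := by
  rw [card_filter_product]
  push_cast
  simp only [card_filter]
  push_cast
  rw [← sum_Ioc_add_sum_Ioc (by omega : M - 1 ≤ K - M) (by omega : K - M ≤ A),
    sum_congr rfl fun c hc => (sum_Ioc_add_sum_Ioc (f := fun d => if K ≤ c + d then (1 : ℝ) else 0)
      (by have := mem_Ioc.1 hc; omega : M - 1 ≤ K - c - 1)
      (by have := mem_Ioc.1 hc; omega : K - c - 1 ≤ A)).symm]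
  simp (config := {contextual := true}) (disch := simp only [mem_Ioc] at *; omega) only
    [if_pos, if_neg, sum_const_zero, sum_Ioc_const]
  push_cast
  ring_nf
  simp (disch := omega) only [sum_add_distrib, sum_sub_distrib, sum_Ioc_const, sum_Ioc_id]
  rw [cornerCount]
  push_cast
  ring

/-- Given `a, b`, the condition `SubsetSumsGe T a b c d` says exactly that `c` and `d` are at
least `coordLowerBound T a b` and `c + d` is at least `sumLowerBound T a b`. -/
def coordLowerBound (T a b : ℤ) : ℤ := max (max 0 (T - a)) (max (T - b) (3 * T - a - b))

def sumLowerBound (T a b : ℤ) : ℤ := max (max T (3 * T - a)) (max (3 * T - b) (6 * T - a - b))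

lemma card_pairs_subsetSumsGe {A T a b : ℤ} (hT : 0 ≤ T) (hA : 3 * T ≤ A) (ha : 0 ≤ a)
    (hb : 0 ≤ b) :
    (#{q ∈ Ioc (-1) A ×ˢ Ioc (-1) A | SubsetSumsGe T a b q.1 q.2} : ℝ) =
      if T ≤ a + b then cornerCount A (coordLowerBound T a b) (sumLowerBound T a b) else 0 := by
  split_ifs with hab
  · rw [← card_filter_le_add_eq_cornerCount (by unfold coordLowerBound sumLowerBound; omega)
      (by unfold coordLowerBound sumLowerBound; omega)]
    congr 2
    ext ⟨c, d⟩
    rw [mem_filter, mem_filter]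
    simp only [mem_product, mem_Ioc, SubsetSumsGe, coordLowerBound, sumLowerBound]
    omega
  · rw [filter_false_of_mem fun q _ h => hab h.1, card_empty, Nat.cast_zero]

lemma sum_sum_cornerCount {A T : ℤ} (hT : 0 ≤ T) (hA : 3 * T ≤ A) :
    ∑ a ∈ Ioc (-1) A, ∑ b ∈ Ioc (-1) A,
        (if T ≤ a + b then cornerCount A (coordLowerBound T a b) (sumLowerBound T a b) else 0) =
      ((A : ℝ) + 1) ^ 4 - 3 * T * (T + 1) * A ^ 2 - 2 * T * (2 * T ^ 2 + 3 * T + 3) * A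
        - T * (9 * T ^ 3 + 10 * T ^ 2 + 9 * T + 12) / 4 := by
  set g : ℤ → ℤ → ℝ := fun a b =>
    if T ≤ a + b then cornerCount A (coordLowerBound T a b) (sumLowerBound T a b) else 0 with hg
  -- On each piece the test `T ≤ a + b` and all the maxima are decided, so `g` is polynomial.
  calc ∑ a ∈ Ioc (-1) A, ∑ b ∈ Ioc (-1) A, g a b
      = ∑ a ∈ Ioc (-1) (T - 1), (∑ b ∈ Ioc (-1) (T - a - 1), g a b
            + (∑ b ∈ Ioc (T - a - 1) (2 * T), g a b
            + (∑ b ∈ Ioc (2 * T) (3 * T), g a b + ∑ b ∈ Ioc (3 * T) A, g a b)))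
        + (∑ a ∈ Ioc (T - 1) (2 * T - 1), (∑ b ∈ Ioc (-1) (3 * T - a), g a b
            + (∑ b ∈ Ioc (3 * T - a) (3 * T), g a b + ∑ b ∈ Ioc (3 * T) A, g a b))
        + (∑ a ∈ Ioc (2 * T - 1) (3 * T - 1), (∑ b ∈ Ioc (-1) (T - 1), g a b
            + (∑ b ∈ Ioc (T - 1) (5 * T - a), g a b + ∑ b ∈ Ioc (5 * T - a) A, g a b))
        + ∑ a ∈ Ioc (3 * T - 1) A, (∑ b ∈ Ioc (-1) (T - 1), g a b
            + (∑ b ∈ Ioc (T - 1) (2 * T), g a b + ∑ b ∈ Ioc (2 * T) A, g a b)))) := by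
        simp (config := {contextual := true})
          (disch := first | omega | (simp only [mem_Ioc] at *; omega)) only [sum_Ioc_add_sum_Ioc]
    _ = _ := by
      simp (config := {contextual := true})
        (disch := first | omega | (simp only [mem_Ioc] at *; omega)) only
        [hg, coordLowerBound, sumLowerBound, max_eq_left, max_eq_right, if_pos, if_neg]
      simp only [cornerCount]
      push_cast
      ring_nf
      simp (config := {contextual := true}) (disch := simp only [mem_Ioc] at *; omega) only
        [sum_add_distrib, sum_sub_distrib, ← mul_sum, ← sum_mul, sum_const_zero, sum_Ioc_const,
          sum_Ioc_id, sum_Ioc_sq]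
      push_cast
      ring_nf
      simp (disch := omega) only [sum_add_distrib, sum_sub_distrib, sum_neg_distrib, ← mul_sum,
        ← sum_mul, sum_Ioc_const, sum_Ioc_id, sum_Ioc_sq, sum_Ioc_cube]
      push_cast
      ring

lemma card_quadruples_subsetSumsGe {A T : ℤ} (hT : 0 ≤ T) (hA : 3 * T ≤ A) :
    (#{p ∈ (Ioc (-1) A ×ˢ Ioc (-1) A) ×ˢ (Ioc (-1) A ×ˢ Ioc (-1) A) |
        SubsetSumsGe T p.1.1 p.1.2 p.2.1 p.2.2} : ℝ) =
      ((A : ℝ) + 1) ^ 4 - 3 * T * (T + 1) * A ^ 2 - 2 * T * (2 * T ^ 2 + 3 * T + 3) * A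
        - T * (9 * T ^ 3 + 10 * T ^ 2 + 9 * T + 12) / 4 := by
  rw [card_filter_product, Nat.cast_sum, sum_product, ← sum_sum_cornerCount hT hA]
  refine sum_congr rfl fun a ha => sum_congr rfl fun b hb => ?_
  exact card_pairs_subsetSumsGe hT hA (by linarith [(mem_Ioc.1 ha).1])
    (by linarith [(mem_Ioc.1 hb).1])

/-- The Ehrhart polynomial of `P(4,n)` for `n ≥ 3`:
`|t·P(4,n) ∩ ℤ⁴| = (n⁴ - 3n² - 4n - 9/4)t⁴ + (4n³ - 3n² - 6n - 5/2)t³ +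
(6n² - 6n - 9/4)t² + (4n - 3)t + 1`. -/
theorem ehrhart_P4n (n t : ℕ) (hn : 3 ≤ n) (ht : 0 < t) :
    (latticeCount 4 n t : ℝ) =
      ((n : ℝ) ^ 4 - 3 * (n : ℝ) ^ 2 - 4 * (n : ℝ) - 9 / 4) * (t : ℝ) ^ 4 +
        (4 * (n : ℝ) ^ 3 - 3 * (n : ℝ) ^ 2 - 6 * (n : ℝ) - 5 / 2) * (t : ℝ) ^ 3 +
        (6 * (n : ℝ) ^ 2 - 6 * (n : ℝ) - 9 / 4) * (t : ℝ) ^ 2 +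
        (4 * (n : ℝ) - 3) * (t : ℝ) + 1 := by
  rw [latticeCount_eq_ncard (by omega) ht, ncard_eq_card_filter_subsetSumsGe,
    card_quadruples_subsetSumsGe (by positivity) (by nlinarith)]
  push_cast
  ring
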